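/- arXiv:1901.05789 — 2 statements merged into one kernel-verified Lean document; each statement's English description precedes it below -/
import Mathlib

section
/- Let H₀ be self-adjoint, V bounded self-adjoint, H₁ = H₀ + V, z non-real, R₀ = (H₀ - z)^{-1}, R₁ = (H₁ - z)^{-1}. Then I + V R₀ is invertible and for every m ≥ 1, R₁^m - R₀^m = -(∑_{l=1}^{m} R₀^{l} V R₀^{m-l+1} + ∑_{l=1}^{m-1} (R₁^{l} - R₀^{l}) V R₀^{m-l+1}) (I + V R₀)^{-1}. -/
/-!
Off the real axis both `H₀ - z` and `H₁ - z` are invertible, and the second resolvent identity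
`R₁ - R₀ = -R₁ V R₀` holds, and `I + V R₀ = (H₁ - z) R₀` is invertible. Telescoping
`R₁^m - R₀^m = R₁^{m-1} (R₁ - R₀) + (R₁^{m-1} - R₀^{m-1}) R₀` gives
`R₁^m - R₀^m = -∑_{l=1}^m R₁^l V R₀^{m-l+1}`. Writing `R₁^l = R₀^l + (R₁^l - R₀^l)` there and moving
the `l = m` term `(R₁^m - R₀^m) V R₀` to the left yields `(R₁^m - R₀^m)(I + V R₀) = -(…)`.
-/

open Finset
open scoped Ring

theorem IsSelfAdjoint.isUnit_sub_smul_one {A : Type*} [CStarAlgebra A] {a : A}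
    (ha : IsSelfAdjoint a) {z : ℂ} (hz : z.im ≠ 0) : IsUnit (a - z • (1 : A)) := by
  have hzσ : z ∉ spectrum ℂ a := fun hmem => hz (by rw [ha.mem_spectrum_eq_re hmem]; simp)
  rw [← neg_sub, IsUnit.neg_iff, ← Algebra.algebraMap_eq_smul_one]
  exact spectrum.notMem_iff.mp hzσ

section Ring

variable {R : Type*} [Ring R]

theorem Ring.inverse_add_sub_inverse {a v : R} (ha : IsUnit a) (hav : IsUnit (a + v)) :
    (a + v)⁻¹ʳ - a⁻¹ʳ = -((a + v)⁻¹ʳ * v * a⁻¹ʳ) := by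
  rw [Ring.inverse_sub_inverse (iff_of_true hav ha)]
  noncomm_ring

theorem Ring.isUnit_one_add_mul_inverse {a v : R} (ha : IsUnit a) (hav : IsUnit (a + v)) :
    IsUnit (1 + v * a⁻¹ʳ) := by
  have hfactor : 1 + v * a⁻¹ʳ = (a + v) * a⁻¹ʳ := by
    rw [add_mul, Ring.mul_inverse_cancel a ha]
  exact hfactor ▸ hav.mul ha.ringInverse

variable {r₀ r₁ v : R}

theorem pow_sub_pow_eq_neg_sum_of_sub_eq (h : r₁ - r₀ = -(r₁ * v * r₀)) (m : ℕ) :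
    r₁ ^ m - r₀ ^ m = -∑ l ∈ Icc 1 m, r₁ ^ l * v * r₀ ^ (m - l + 1) := by
  induction m with
  | zero => simp
  | succ m ih =>
    have hsplit : r₁ ^ (m + 1) - r₀ ^ (m + 1) = r₁ ^ m * (r₁ - r₀) + (r₁ ^ m - r₀ ^ m) * r₀ := by
      noncomm_ring
    have hshift : ∀ l ∈ Icc 1 m,
        r₁ ^ l * v * r₀ ^ (m - l + 1) * r₀ = r₁ ^ l * v * r₀ ^ (m + 1 - l + 1) := by
      intro l hl
      rw [mul_assoc, ← pow_succ, show m + 1 - l = m - l + 1 by grind]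
    rw [hsplit, h, ih, sum_Icc_succ_top (by omega), neg_mul, sum_mul, sum_congr rfl hshift,
      Nat.sub_self, pow_succ]
    noncomm_ring

theorem pow_sub_pow_mul_one_add_mul_eq (h : r₁ - r₀ = -(r₁ * v * r₀)) {m : ℕ} (hm : 1 ≤ m) :
    (r₁ ^ m - r₀ ^ m) * (1 + v * r₀) =
      -((∑ l ∈ Icc 1 m, r₀ ^ l * v * r₀ ^ (m - l + 1)) +
          ∑ l ∈ Icc 1 (m - 1), (r₁ ^ l - r₀ ^ l) * v * r₀ ^ (m - l + 1)) := by
  obtain ⟨n, rfl⟩ := Nat.exists_eq_add_of_le' hm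
  have hsum : ∑ l ∈ Icc 1 (n + 1), r₁ ^ l * v * r₀ ^ (n + 1 - l + 1) =
      ∑ l ∈ Icc 1 (n + 1), r₀ ^ l * v * r₀ ^ (n + 1 - l + 1) +
        ∑ l ∈ Icc 1 (n + 1), (r₁ ^ l - r₀ ^ l) * v * r₀ ^ (n + 1 - l + 1) := by
    rw [← sum_add_distrib]
    exact sum_congr rfl fun l _ => by noncomm_ring
  have htel := pow_sub_pow_eq_neg_sum_of_sub_eq h (n + 1)
  rw [hsum, sum_Icc_succ_top (by omega) (fun l => (r₁ ^ l - r₀ ^ l) * v * r₀ ^ (n + 1 - l + 1)),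
    Nat.sub_self, zero_add, pow_one, eq_neg_iff_add_eq_zero] at htel
  rw [Nat.add_sub_cancel, eq_neg_iff_add_eq_zero, ← htel]
  noncomm_ring

end Ring

/-- `I + V R₀` is invertible and the recursion identity (g10) holds:
`R₁^m - R₀^m = -(∑_{l=1}^m R₀^l V R₀^{m-l+1}
  + ∑_{l=1}^{m-1} (R₁^l - R₀^l) V R₀^{m-l+1}) (I + V R₀)⁻¹`. -/
theorem stmt6 {H : Type*} [NormedAddCommGroup H] [InnerProductSpace ℂ H] [CompleteSpace H]
    (H₀ V : H →L[ℂ] H) (hH₀ : IsSelfAdjoint H₀) (hV : IsSelfAdjoint V)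
    (z : ℂ) (hz : z.im ≠ 0)
    (H₁ R₀ R₁ : H →L[ℂ] H) (hH₁ : H₁ = H₀ + V)
    (hR₀ : R₀ = Ring.inverse (H₀ - z • 1)) (hR₁ : R₁ = Ring.inverse (H₁ - z • 1)) :
    IsUnit (1 + V * R₀) ∧
    ∀ m : ℕ, 1 ≤ m →
      R₁ ^ m - R₀ ^ m =
        -(((∑ l ∈ Finset.Icc 1 m, R₀ ^ l * V * R₀ ^ (m - l + 1)) +
            ∑ l ∈ Finset.Icc 1 (m - 1), (R₁ ^ l - R₀ ^ l) * V * R₀ ^ (m - l + 1)) *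
          Ring.inverse (1 + V * R₀)) := by
  have hshift : H₁ - z • 1 = (H₀ - z • 1) + V := by rw [hH₁]; abel
  have u₀ : IsUnit (H₀ - z • 1) := hH₀.isUnit_sub_smul_one hz
  have u₁ : IsUnit ((H₀ - z • 1) + V) := hshift ▸ (hH₁ ▸ hH₀.add hV).isUnit_sub_smul_one hz
  rw [hshift] at hR₁
  have hres : R₁ - R₀ = -(R₁ * V * R₀) := by
    rw [hR₀, hR₁]
    exact Ring.inverse_add_sub_inverse u₀ u₁
  have hunit : IsUnit (1 + V * R₀) := hR₀ ▸ Ring.isUnit_one_add_mul_inverse u₀ u₁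
  refine ⟨hunit, fun m hm => ?_⟩
  rw [← neg_mul, Ring.eq_mul_inverse_iff_mul_eq _ _ _ hunit]
  exact pow_sub_pow_mul_one_add_mul_eq hres hm
end

section
/- Let χ₀ be as above and 0 < γ < 1. Then the function f_γ(x) = χ₀(x)·|log |x||^γ belongs to VMO(ℝ): its mean oscillation over intervals I tends to 0 uniformly as |I| → 0, i.e. lim_{ε→0} sup_{|I| ≤ ε} |I|^{-1} ∫_I |f_γ - ⟨f_γ⟩_I| dx = 0. -/
open MeasureTheory Real Set Filter


lemma aux_tangent {γ A B : ℝ} (hγ0 : 0 ≤ γ) (hγ1 : γ ≤ 1) (hB : 0 < B) (hAB : B ≤ A) :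
    A ^ γ ≤ B ^ γ + γ * B ^ (γ - 1) * (A - B) := by
  have hA : 0 < A := lt_of_lt_of_le hB hAB
  have hs : -1 ≤ A / B - 1 := by
    have : 0 ≤ A / B := by positivity
    linarith
  have h := rpow_one_add_le_one_add_mul_self hs hγ0 hγ1
  have h1 : (1 + (A / B - 1)) = A / B := by ring
  rw [h1] at h
  have hBγ : (0:ℝ) < B ^ γ := Real.rpow_pos_of_pos hB γ
  have e1 : (A / B) ^ γ * B ^ γ = A ^ γ := by
    rw [← Real.mul_rpow (by positivity) hB.le, div_mul_cancel₀ _ hB.ne']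
  have e2 : B ^ (γ - 1) = B ^ γ / B := by
    rw [Real.rpow_sub hB, Real.rpow_one]
  have h2 : (A / B) ^ γ * B ^ γ ≤ (1 + γ * (A / B - 1)) * B ^ γ :=
    mul_le_mul_of_nonneg_right h hBγ.le
  rw [e1] at h2
  calc A ^ γ ≤ (1 + γ * (A / B - 1)) * B ^ γ := h2
    _ = B ^ γ + γ * (B ^ γ / B) * (A - B) := by field_simp
    _ = B ^ γ + γ * B ^ (γ - 1) * (A - B) := by rw [e2]

lemma aux_log_inv_le {x : ℝ} (hx : 0 < x) : Real.log x⁻¹ ≤ 2 * x ^ (-(2⁻¹:ℝ)) := by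
  have h1 : Real.log (x ^ (-(2⁻¹:ℝ))) = (-(2⁻¹:ℝ)) * Real.log x := Real.log_rpow hx _
  have h2 : Real.log (x ^ (-(2⁻¹:ℝ))) ≤ x ^ (-(2⁻¹:ℝ)) - 1 :=
    Real.log_le_sub_one_of_pos (Real.rpow_pos_of_pos hx _)
  rw [Real.log_inv]
  nlinarith [Real.rpow_pos_of_pos hx (-(2⁻¹:ℝ))]

lemma aux_rpow_le_one_add {γ t : ℝ} (hγ0 : 0 ≤ γ) (hγ1 : γ ≤ 1) (ht : 0 ≤ t) :
    t ^ γ ≤ 1 + t := by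
  rcases le_total t 1 with h | h
  · have := Real.rpow_le_one ht h hγ0
    linarith
  · calc t ^ γ ≤ t ^ (1:ℝ) := Real.rpow_le_rpow_of_exponent_le h hγ1
      _ = t := Real.rpow_one t
      _ ≤ 1 + t := by linarith

lemma aux_abs_log_abs_le (x : ℝ) :
    abs (Real.log (abs x)) ≤ abs x + 2 * (abs x) ^ (-(2⁻¹:ℝ)) := by
  rcases eq_or_ne x 0 with rfl | hx
  · simp [Real.zero_rpow (by norm_num : (-(2⁻¹:ℝ)) ≠ 0)]
  · have hax : 0 < |x| := abs_pos.2 hx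
    rcases le_total (abs x) 1 with h | h
    · have hl : Real.log |x| ≤ 0 := Real.log_nonpos hax.le h
      rw [abs_of_nonpos hl]
      have := aux_log_inv_le hax
      rw [Real.log_inv] at this
      nlinarith [hax]
    · have hl : 0 ≤ Real.log |x| := Real.log_nonneg h
      rw [abs_of_nonneg hl]
      have h2 : Real.log |x| ≤ |x| - 1 := Real.log_le_sub_one_of_pos hax
      have : (0:ℝ) ≤ |x| ^ (-(2⁻¹:ℝ)) := Real.rpow_nonneg hax.le _
      linarith

lemma aux_int_rpow_half : ∀ a b : ℝ, IntervalIntegrable (fun x => |x| ^ (-(2⁻¹:ℝ))) volume a b := by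
  have key : ∀ t : ℝ, 0 ≤ t → IntervalIntegrable (fun x => |x| ^ (-(2⁻¹:ℝ))) volume 0 t := by
    intro t ht
    have h := intervalIntegral.intervalIntegrable_rpow' (a := 0) (b := t)
      (r := -(2⁻¹:ℝ)) (by norm_num)
    rw [intervalIntegrable_iff] at h ⊢
    apply h.congr_fun ?_ measurableSet_uIoc
    intro x hx
    rw [Set.uIoc_of_le ht] at hx
    simp [abs_of_pos hx.1]
  have key2 : ∀ t : ℝ, IntervalIntegrable (fun x => |x| ^ (-(2⁻¹:ℝ))) volume 0 t := by
    intro t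
    rcases le_total 0 t with h | h
    · exact key t h
    · rw [IntervalIntegrable.iff_comp_neg]
      simp only [abs_neg, neg_zero]
      exact key (-t) (by linarith)
  intro a b
  exact (key2 a).symm.trans (key2 b)

lemma aux_int_log : ∀ a b : ℝ, IntervalIntegrable Real.log volume a b := by
  intro a b
  apply IntervalIntegrable.mono_fun'
    (g := fun x => |x| + 2 * |x| ^ (-(2⁻¹:ℝ)))
  · exact (continuous_abs.intervalIntegrable a b).add ((aux_int_rpow_half a b).const_mul 2)
  · exact Real.measurable_log.aestronglyMeasurable
  · apply Filter.Eventually.of_forall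
    intro x
    have := aux_abs_log_abs_le x
    rw [Real.log_abs] at this
    simpa using this

lemma aux_int_w {γ : ℝ} (hγ0 : 0 < γ) (hγ1 : γ < 1) :
    ∀ a b : ℝ, IntervalIntegrable (fun x => abs (Real.log (abs x)) ^ γ) volume a b := by
  intro a b
  apply IntervalIntegrable.mono_fun'
    (g := fun x => 1 + (abs x + 2 * (abs x) ^ (-(2⁻¹:ℝ))))
  · exact (intervalIntegrable_const (c := 1)).add
      ((continuous_abs.intervalIntegrable a b).add ((aux_int_rpow_half a b).const_mul 2))
  · exact ((Real.measurable_log.comp measurable_abs).abs.pow_const γ).aestronglyMeasurable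
  · apply Filter.Eventually.of_forall
    intro x
    have h1 : abs (Real.log (abs x)) ^ γ ≤ 1 + abs (Real.log (abs x)) :=
      aux_rpow_le_one_add hγ0.le hγ1.le (abs_nonneg _)
    have h2 := aux_abs_log_abs_le x
    have h3 : (0:ℝ) ≤ abs (Real.log (abs x)) ^ γ := Real.rpow_nonneg (abs_nonneg _) _
    simp only [Real.norm_eq_abs]
    rw [abs_of_nonneg h3]
    linarith

lemma aux_integral_log_zero {s : ℝ} (hs : 0 < s) :
    ∫ x in (0:ℝ)..s, Real.log x = s * Real.log s - s := by
  have h := intervalIntegral.integral_eq_sub_of_hasDeriv_right_of_le (f := fun x => x * Real.log x - x)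
    (f' := Real.log) (a := 0) (b := s) hs.le
    (Real.continuous_mul_log.sub continuous_id).continuousOn
    (fun x hx => by
      have hx0 : x ≠ 0 := ne_of_gt hx.1
      have : HasDerivAt (fun y => y * Real.log y - y) (Real.log x) x := by
        have h1 : HasDerivAt (fun y : ℝ => y * Real.log y) (1 * Real.log x + x * x⁻¹) x :=
          (hasDerivAt_id x).mul (Real.hasDerivAt_log hx0)
        have h2 : HasDerivAt (fun y : ℝ => y * Real.log y - y) (1 * Real.log x + x * x⁻¹ - 1) x :=
          h1.sub (hasDerivAt_id x)
        convert h2 using 1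
        simp [hx0]
      exact this.hasDerivWithinAt)
    (aux_int_log 0 s)
  rw [h]
  simp

lemma aux_osc {F : ℝ → ℝ} {a b : ℝ} (hab : a < b)
    (hF : IntervalIntegrable F volume a b) (m : ℝ) :
    ∫ x in a..b, |F x - (b - a)⁻¹ * ∫ y in a..b, F y| ≤ 2 * ∫ x in a..b, |F x - m| := by
  set A := (b - a)⁻¹ * ∫ y in a..b, F y with hA
  have hd : (0:ℝ) < b - a := by linarith
  have hFm : IntervalIntegrable (fun x => |F x - m|) volume a b :=
    (hF.sub (intervalIntegrable_const (c := m))).norm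
  have hFA : IntervalIntegrable (fun x => |F x - A|) volume a b :=
    (hF.sub (intervalIntegrable_const (c := A))).norm
  have hmA : |m - A| * (b - a) ≤ ∫ x in a..b, |F x - m| := by
    have e1 : ∫ x in a..b, (m - F x) = m * (b - a) - ∫ y in a..b, F y := by
      rw [intervalIntegral.integral_sub (intervalIntegrable_const (c := m)) hF]
      simp [mul_comm]
    have e2 : m - A = (b - a)⁻¹ * ∫ x in a..b, (m - F x) := by
      rw [e1, hA]; field_simp
    have e3 : |∫ x in a..b, (m - F x)| ≤ ∫ x in a..b, |m - F x| :=
      intervalIntegral.abs_integral_le_integral_abs hab.le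
    have e4 : (∫ x in a..b, |m - F x|) = ∫ x in a..b, |F x - m| := by
      congr 1; ext x; rw [abs_sub_comm]
    rw [e2]
    rw [abs_mul, abs_of_nonneg (by positivity : (0:ℝ) ≤ (b-a)⁻¹)]
    rw [mul_comm (b-a)⁻¹ _, mul_assoc, inv_mul_cancel₀ hd.ne', mul_one]
    calc |∫ x in a..b, (m - F x)| ≤ ∫ x in a..b, |m - F x| := e3
      _ = _ := e4
  have step : ∀ x, |F x - A| ≤ |F x - m| + |m - A| := by
    intro x
    calc |F x - A| = |(F x - m) + (m - A)| := by ring_nf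
      _ ≤ |F x - m| + |m - A| := abs_add_le _ _
  calc ∫ x in a..b, |F x - A| ≤ ∫ x in a..b, (|F x - m| + |m - A|) :=
        intervalIntegral.integral_mono_on hab.le hFA
          (hFm.add (intervalIntegrable_const (c := |m - A|))) (fun x _ => step x)
    _ = (∫ x in a..b, |F x - m|) + |m - A| * (b - a) := by
        rw [intervalIntegral.integral_add hFm (intervalIntegrable_const (c := |m - A|))]
        simp [mul_comm]
    _ ≤ 2 * ∫ x in a..b, |F x - m| := by linarith

set_option maxHeartbeats 1000000 in
/-- For `0 < γ < 1`, the function `f_γ(x) = χ₀(x) |log |x||^γ` belongs to `VMO(ℝ)`: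
its mean oscillation over intervals of length at most `ε` tends to `0` as `ε → 0`. -/
theorem stmt10 (c : ℝ) (hc0 : 0 < c) (hc1 : c < 1) (γ : ℝ) (hγ0 : 0 < γ) (hγ1 : γ < 1)
    (χ₀ : ℝ → ℝ) (hsmooth : ContDiff ℝ (⊤ : ℕ∞) χ₀) (hcs : HasCompactSupport χ₀)
    (hsupp : Function.support χ₀ ⊆ Set.Ioo (-c) c)
    (hone : ∀ᶠ x in nhds (0 : ℝ), χ₀ x = 1) :
    ∀ η : ℝ, 0 < η → ∃ ε : ℝ, 0 < ε ∧ ∀ a b : ℝ, a < b → b - a ≤ ε →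
      (b - a)⁻¹ * ∫ x in a..b,
          abs (χ₀ x * abs (Real.log (abs x)) ^ γ -
            (b - a)⁻¹ * ∫ y in a..b, χ₀ y * abs (Real.log (abs y)) ^ γ) ≤ η := by
  intro η hη
  set w : ℝ → ℝ := fun x => abs (Real.log (abs x)) ^ γ with hwdef
  set f : ℝ → ℝ := fun x => χ₀ x * w x with hfdef
  -- χ₀ = 1 near 0
  obtain ⟨ρ, hρpos, hρ⟩ : ∃ ρ > 0, ∀ y : ℝ, |y| < ρ → χ₀ y = 1 := by
    rcases Metric.eventually_nhds_iff.mp hone with ⟨ρ, hρ, h⟩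
    exact ⟨ρ, hρ, fun y hy => h (by simpa [Real.dist_eq] using hy)⟩
  obtain ⟨C₀, hC₀⟩ := hcs.exists_bound_of_continuous hsmooth.continuous
  have hC₀' : ∀ x, |χ₀ x| ≤ C₀ := by simpa [Real.norm_eq_abs] using hC₀
  have hC₀0 : 0 ≤ C₀ := le_trans (abs_nonneg _) (hC₀' 0)
  obtain ⟨K, hK⟩ := (hcs.deriv).exists_bound_of_continuous (hsmooth.continuous_deriv (by simp))
  have hK' : ∀ x, |deriv χ₀ x| ≤ K := by simpa [Real.norm_eq_abs] using hK
  have hK0 : 0 ≤ K := le_trans (abs_nonneg _) (hK' 0)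
  have hχ₀zero : ∀ x : ℝ, c ≤ |x| → χ₀ x = 0 := by
    intro x hx
    by_contra h
    obtain ⟨h1, h2⟩ := hsupp (Function.mem_support.mpr h)
    have : |x| < c := abs_lt.mpr ⟨h1, h2⟩
    linarith
  set c₁ : ℝ := (c+1)/2 with hc₁def
  have hc₁a : c < c₁ := by rw [hc₁def]; linarith
  have hc₁b : c₁ < 1 := by rw [hc₁def]; linarith
  have hc₁0 : 0 < c₁ := by rw [hc₁def]; linarith
  have hM₁pos : 0 < Real.log c₁⁻¹ := by
    rw [Real.log_inv]
    have := Real.log_neg hc₁0 hc₁b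
    linarith
  set M₁ : ℝ := (Real.log c₁⁻¹) ^ (γ-1) with hM₁def
  have hM₁0 : 0 ≤ M₁ := Real.rpow_nonneg hM₁pos.le _
  obtain ⟨Φ, hΦdef⟩ : ∃ Φ : ℝ → ℝ, Φ = fun δ => K*(δ + 2*δ^(2⁻¹:ℝ)) + C₀*γ*M₁*δ^(2⁻¹:ℝ)
    + C₀*γ*(2⁻¹ * Real.log δ⁻¹)^(γ-1) := ⟨_, rfl⟩
  obtain ⟨Ψ, hΨdef⟩ : ∃ Ψ : ℝ → ℝ, Ψ = fun δ => 8*γ*(Real.log (2*δ)⁻¹)^(γ-1) := ⟨_, rfl⟩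
  -- integrability of f
  have hfint : ∀ a b : ℝ, IntervalIntegrable f volume a b := by
    intro a b
    apply IntervalIntegrable.mono_fun' (g := fun x => C₀ * w x)
    · exact (aux_int_w hγ0 hγ1 a b).const_mul C₀
    · exact ((hsmooth.continuous.measurable).mul
        ((Real.measurable_log.comp measurable_abs).abs.pow_const γ)).aestronglyMeasurable
    · apply Filter.Eventually.of_forall
      intro x
      have hw0 : 0 ≤ w x := Real.rpow_nonneg (abs_nonneg _) _
      calc ‖f x‖ = |χ₀ x| * w x := by
            rw [hfdef]; simp only [Real.norm_eq_abs, abs_mul]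
            rw [abs_of_nonneg hw0]
        _ ≤ C₀ * w x := mul_le_mul_of_nonneg_right (hC₀' x) hw0
  -- limits
  have hT1 : Tendsto (fun δ : ℝ => Real.log δ⁻¹) (nhdsWithin 0 (Ioi 0)) atTop :=
    Real.tendsto_log_atTop.comp tendsto_inv_nhdsGT_zero
  have hT2 : Tendsto (fun δ : ℝ => (2⁻¹ * Real.log δ⁻¹) ^ (γ-1))
      (nhdsWithin 0 (Ioi 0)) (nhds 0) := by
    have h2 : Tendsto (fun δ : ℝ => 2⁻¹ * Real.log δ⁻¹) (nhdsWithin 0 (Ioi 0)) atTop :=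
      hT1.const_mul_atTop (by norm_num)
    have := (tendsto_rpow_neg_atTop (by linarith : (0:ℝ) < 1 - γ)).comp h2
    simpa [neg_sub, Function.comp_def] using this
  have hT3 : Tendsto (fun δ : ℝ => (Real.log (2*δ)⁻¹) ^ (γ-1))
      (nhdsWithin 0 (Ioi 0)) (nhds 0) := by
    have hdouble : Tendsto (fun δ : ℝ => 2*δ) (nhdsWithin (0:ℝ) (Ioi 0))
        (nhdsWithin (0:ℝ) (Ioi 0)) := by
      rw [tendsto_nhdsWithin_iff]
      constructor
      · have : Tendsto (fun δ : ℝ => 2*δ) (nhds 0) (nhds 0) := by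
          simpa using (continuous_mul_left (2:ℝ)).tendsto (0:ℝ)
        exact this.mono_left nhdsWithin_le_nhds
      · exact eventually_mem_nhdsWithin.mono (fun x hx => by
          simp only [Set.mem_Ioi] at hx ⊢; linarith)
    have hlog2 : Tendsto (fun δ : ℝ => Real.log (2*δ)⁻¹) (nhdsWithin 0 (Ioi 0)) atTop :=
      (Real.tendsto_log_atTop.comp tendsto_inv_nhdsGT_zero).comp hdouble
    have := (tendsto_rpow_neg_atTop (by linarith : (0:ℝ) < 1 - γ)).comp hlog2
    simpa [neg_sub, Function.comp_def] using this
  have hroot : Tendsto (fun δ : ℝ => δ ^ (2⁻¹:ℝ)) (nhdsWithin (0:ℝ) (Ioi 0)) (nhds 0) := by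
    have hc : ContinuousAt (fun x : ℝ => x ^ (2⁻¹:ℝ)) 0 :=
      Real.continuousAt_rpow_const 0 _ (Or.inr (by norm_num))
    have := hc.tendsto
    rw [Real.zero_rpow (by norm_num : (2⁻¹:ℝ) ≠ 0)] at this
    exact this.mono_left nhdsWithin_le_nhds
  have hid0 : Tendsto (fun δ : ℝ => δ) (nhdsWithin (0:ℝ) (Ioi 0)) (nhds 0) :=
    tendsto_id.mono_left nhdsWithin_le_nhds
  have hΦ0 : Tendsto Φ (nhdsWithin (0:ℝ) (Ioi 0)) (nhds 0) := by
    rw [hΦdef]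
    have h1 : Tendsto (fun δ : ℝ => K*(δ + 2*δ^(2⁻¹:ℝ))) (nhdsWithin (0:ℝ) (Ioi 0))
        (nhds (K*(0 + 2*0))) := ((hid0.add (hroot.const_mul 2)).const_mul K)
    have h2 : Tendsto (fun δ : ℝ => C₀*γ*M₁*δ^(2⁻¹:ℝ)) (nhdsWithin (0:ℝ) (Ioi 0))
        (nhds (C₀*γ*M₁*0)) := hroot.const_mul _
    have h3 := hT2.const_mul (C₀*γ)
    have := (h1.add h2).add h3
    simpa using this
  have hΨ0 : Tendsto Ψ (nhdsWithin (0:ℝ) (Ioi 0)) (nhds 0) := by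
    rw [hΨdef]
    have := hT3.const_mul (8*γ)
    simpa using this
  -- eventual smallness
  have hev : ∀ᶠ δ in nhdsWithin (0:ℝ) (Ioi 0),
      (2*Φ δ ≤ η ∧ Ψ δ ≤ η) ∧ (2*δ < ρ ∧ 2*δ < 1) := by
    have e1 : ∀ᶠ δ in nhdsWithin (0:ℝ) (Ioi 0), Φ δ < η/2 :=
      hΦ0.eventually (gt_mem_nhds (by positivity))
    have e2 : ∀ᶠ δ in nhdsWithin (0:ℝ) (Ioi 0), Ψ δ < η :=
      hΨ0.eventually (gt_mem_nhds hη)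
    have e3 : ∀ᶠ δ in nhdsWithin (0:ℝ) (Ioi 0), δ < min (ρ/2) 2⁻¹ := by
      apply eventually_nhdsWithin_of_eventually_nhds
      exact Filter.Tendsto.eventually_lt_const (by positivity) tendsto_id
    filter_upwards [e1, e2, e3] with δ h1 h2 h3
    have h3a := lt_of_lt_of_le h3 (min_le_left _ _)
    have h3b := lt_of_lt_of_le h3 (min_le_right _ _)
    exact ⟨⟨by linarith, h2.le⟩, by constructor <;> linarith⟩
  -- extract ε
  obtain ⟨ε', hε', hP⟩ :=
    (nhdsWithin_hasBasis Metric.nhds_basis_ball (Ioi (0:ℝ))).eventually_iff.mp hev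
  refine ⟨ε'/2, by positivity, ?_⟩
  intro a b hab hlen
  set δ : ℝ := b - a with hδdef
  have hδ0 : 0 < δ := by rw [hδdef]; linarith
  have hmem : δ ∈ Metric.ball (0:ℝ) ε' ∩ Ioi 0 := by
    constructor
    · rw [Metric.mem_ball, Real.dist_eq, sub_zero, abs_of_pos hδ0]; linarith
    · exact hδ0
  obtain ⟨⟨hΦη, hΨη⟩, hρδ, h1δ⟩ := hP hmem
  have hδ1 : δ < 1 := by linarith
  have hlogδpos : 0 < Real.log δ⁻¹ := by
    rw [Real.log_inv]
    have := Real.log_neg hδ0 hδ1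
    linarith
  suffices hS : δ⁻¹ * (∫ x in a..b, |f x - δ⁻¹ * ∫ y in a..b, f y|) ≤ η by exact hS
  by_cases hcase : δ ≤ a ∨ b ≤ -δ
  · -- Case A : interval away from 0
    have hfar : ∀ x ∈ Icc a b, δ ≤ |x| := by
      intro x hx
      rcases hcase with h | h
      · rw [abs_of_pos (by linarith [hx.1] : (0:ℝ) < x)]; linarith [hx.1]
      · rw [abs_of_neg (by linarith [hx.2] : x < (0:ℝ))]; linarith [hx.2]
    -- the derivative
    obtain ⟨D, hDdef⟩ : ∃ D : ℝ → ℝ, D = fun x => if |x| < c₁ then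
        deriv χ₀ x * w x + χ₀ x * (-x⁻¹ * γ * (-Real.log x) ^ (γ-1)) else 0 := ⟨_, rfl⟩
    have hD : ∀ x : ℝ, x ≠ 0 → HasDerivAt f (D x) x := by
      intro x hx0
      rw [hDdef]
      by_cases hxc : |x| < c₁
      · simp only [if_pos hxc]
        have hax : 0 < |x| := abs_pos.2 hx0
        have hax1 : |x| < 1 := lt_trans hxc hc₁b
        have hlogne : Real.log x ≠ 0 := by
          rw [← Real.log_abs]
          exact ne_of_lt (Real.log_neg hax hax1)
        have h1 : HasDerivAt (fun y : ℝ => -Real.log y) (-x⁻¹) x :=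
          (Real.hasDerivAt_log hx0).neg
        have h2 : HasDerivAt (fun y : ℝ => (-Real.log y) ^ γ)
            (-x⁻¹ * γ * (-Real.log x) ^ (γ-1)) x :=
          h1.rpow_const (Or.inl (by simpa using hlogne))
        have hU : ∀ᶠ y in nhds x, y ∈ {z : ℝ | z ≠ 0 ∧ |z| < 1} := by
          have hopen : IsOpen {z : ℝ | z ≠ 0 ∧ |z| < 1} := by
            have : {z : ℝ | z ≠ 0 ∧ |z| < 1} = {(0:ℝ)}ᶜ ∩ (abs ⁻¹' Iio 1) := by
              ext z; simp [Set.mem_setOf_eq]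
            rw [this]
            exact (isOpen_compl_singleton).inter (isOpen_Iio.preimage continuous_abs)
          exact hopen.mem_nhds ⟨hx0, hax1⟩
        have heq : w =ᶠ[nhds x] fun y : ℝ => (-Real.log y) ^ γ := by
          filter_upwards [hU] with y hy
          obtain ⟨hy0, hy1⟩ := hy
          have : Real.log |y| < 0 := Real.log_neg (abs_pos.2 hy0) hy1
          rw [hwdef]
          simp only
          rw [abs_of_neg this, Real.log_abs]
        have hw' : HasDerivAt w (-x⁻¹ * γ * (-Real.log x) ^ (γ-1)) x :=
          h2.congr_of_eventuallyEq heq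
        have hχ : HasDerivAt χ₀ (deriv χ₀ x) x :=
          ((hsmooth.differentiable (by simp)) x).hasDerivAt
        exact hχ.mul hw'
      · simp only [if_neg hxc]
        push_neg at hxc
        have hU : ∀ᶠ y in nhds x, f y = 0 := by
          have hopen : IsOpen {z : ℝ | c < |z|} := by
            have : {z : ℝ | c < |z|} = abs ⁻¹' Ioi c := rfl
            rw [this]; exact isOpen_Ioi.preimage continuous_abs
          have hxmem : x ∈ {z : ℝ | c < |z|} := lt_of_lt_of_le hc₁a (le_trans hxc le_rfl)
          filter_upwards [hopen.mem_nhds hxmem] with y hy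
          rw [hfdef]
          simp only
          rw [hχ₀zero y (le_of_lt hy), zero_mul]
        exact (hasDerivAt_const x (0:ℝ)).congr_of_eventuallyEq hU
    -- bound on the derivative
    have hhalfpos : (0:ℝ) < δ ^ (2⁻¹:ℝ) := Real.rpow_pos_of_pos hδ0 _
    have hhalfmul : δ * δ ^ (-(2⁻¹:ℝ)) = δ ^ (2⁻¹:ℝ) := by
      nth_rewrite 1 [← Real.rpow_one δ]
      rw [← Real.rpow_add hδ0]
      norm_num
    have hΦpos : 0 ≤ Φ δ := by
      rw [hΦdef]
      have h1 : (0:ℝ) ≤ (2⁻¹ * Real.log δ⁻¹) ^ (γ-1) :=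
        Real.rpow_nonneg (by positivity) _
      positivity
    have hDb : ∀ x : ℝ, δ ≤ |x| → |D x| * δ ≤ Φ δ := by
      intro x hxd
      rw [hDdef]
      by_cases hxc : |x| < c₁
      · simp only [if_pos hxc]
        have hax : 0 < |x| := lt_of_lt_of_le hδ0 hxd
        have hx0 : x ≠ 0 := by intro h; rw [h] at hax; simp at hax
        have hax1 : |x| < 1 := lt_trans hxc hc₁b
        have hA : -Real.log x = Real.log (|x|)⁻¹ := by
          rw [Real.log_inv, Real.log_abs]
        have hApos : 0 < Real.log (|x|)⁻¹ := by
          rw [Real.log_inv]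
          have := Real.log_neg hax hax1
          linarith
        have hwx : w x = (Real.log (|x|)⁻¹) ^ γ := by
          rw [hwdef]
          simp only
          have : Real.log |x| < 0 := Real.log_neg hax hax1
          rw [abs_of_neg this, ← Real.log_inv]
        -- bound for w x
        have hAle : Real.log (|x|)⁻¹ ≤ Real.log δ⁻¹ :=
          Real.log_le_log (by positivity) (inv_anti₀ hδ0 hxd)
        have hwxle : w x ≤ 1 + 2 * δ ^ (-(2⁻¹:ℝ)) := by
          rw [hwx]
          calc (Real.log (|x|)⁻¹) ^ γ ≤ (Real.log δ⁻¹) ^ γ :=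
                Real.rpow_le_rpow hApos.le hAle hγ0.le
            _ ≤ 1 + Real.log δ⁻¹ := aux_rpow_le_one_add hγ0.le hγ1.le hlogδpos.le
            _ ≤ 1 + 2 * δ ^ (-(2⁻¹:ℝ)) := by linarith [aux_log_inv_le hδ0]
        -- bound for the "w'" part
        have hterm2 : δ * ((|x|)⁻¹ * γ * (Real.log (|x|)⁻¹) ^ (γ-1)) ≤
            γ * (M₁ * δ ^ (2⁻¹:ℝ) + (2⁻¹ * Real.log δ⁻¹) ^ (γ-1)) := by
          have hhalf2pos : (0:ℝ) < 2⁻¹ * Real.log δ⁻¹ := by positivity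
          rcases le_or_gt (δ ^ (2⁻¹:ℝ)) |x| with hge | hlt
          · have hb1 : (|x|)⁻¹ ≤ (δ ^ (2⁻¹:ℝ))⁻¹ := inv_anti₀ hhalfpos hge
            have hb2 : (Real.log (|x|)⁻¹) ^ (γ-1) ≤ M₁ := by
              rw [hM₁def]
              refine (Real.rpow_le_rpow_iff_of_neg hApos hM₁pos (by linarith)).mpr ?_
              exact Real.log_le_log (by positivity) (inv_anti₀ hax (le_of_lt hxc))
            have hb3 : (0:ℝ) ≤ (Real.log (|x|)⁻¹) ^ (γ-1) := Real.rpow_nonneg hApos.le _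
            have key : δ * ((|x|)⁻¹ * γ * (Real.log (|x|)⁻¹) ^ (γ-1)) ≤
                δ * ((δ ^ (2⁻¹:ℝ))⁻¹ * γ * M₁) := by
              apply mul_le_mul_of_nonneg_left _ hδ0.le
              apply mul_le_mul (mul_le_mul hb1 le_rfl hγ0.le (by positivity)) hb2 hb3
                (by positivity)
            have hdinv : δ * (δ ^ (2⁻¹:ℝ))⁻¹ = δ ^ (2⁻¹:ℝ) := by
              rw [show ((δ:ℝ) ^ (2⁻¹:ℝ))⁻¹ = δ ^ (-(2⁻¹:ℝ)) from (Real.rpow_neg hδ0.le _).symm]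
              exact hhalfmul
            have e : δ * ((δ ^ (2⁻¹:ℝ))⁻¹ * γ * M₁) = γ * (M₁ * δ ^ (2⁻¹:ℝ)) := by
              calc δ * ((δ ^ (2⁻¹:ℝ))⁻¹ * γ * M₁)
                  = (δ * (δ ^ (2⁻¹:ℝ))⁻¹) * γ * M₁ := by ring
                _ = δ ^ (2⁻¹:ℝ) * γ * M₁ := by rw [hdinv]
                _ = γ * (M₁ * δ ^ (2⁻¹:ℝ)) := by ring
            have hnn : (0:ℝ) ≤ (2⁻¹ * Real.log δ⁻¹) ^ (γ-1) :=
              Real.rpow_nonneg hhalf2pos.le _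
            calc δ * ((|x|)⁻¹ * γ * (Real.log (|x|)⁻¹) ^ (γ-1))
                ≤ γ * (M₁ * δ ^ (2⁻¹:ℝ)) := by rw [← e]; exact key
              _ ≤ γ * (M₁ * δ ^ (2⁻¹:ℝ) + (2⁻¹ * Real.log δ⁻¹) ^ (γ-1)) := by
                  have h6 := mul_nonneg hγ0.le hnn
                  linarith
          · have hb1 : (|x|)⁻¹ ≤ δ⁻¹ := inv_anti₀ hδ0 hxd
            have hb2 : (Real.log (|x|)⁻¹) ^ (γ-1) ≤ (2⁻¹ * Real.log δ⁻¹) ^ (γ-1) := by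
              refine (Real.rpow_le_rpow_iff_of_neg hApos hhalf2pos (by linarith)).mpr ?_
              have : Real.log (δ ^ (2⁻¹:ℝ)) = 2⁻¹ * Real.log δ := Real.log_rpow hδ0 _
              have h4 : Real.log ((δ ^ (2⁻¹:ℝ))⁻¹) = 2⁻¹ * Real.log δ⁻¹ := by
                rw [Real.log_inv, this, Real.log_inv]; ring
              rw [← h4]
              exact Real.log_le_log (by positivity) (inv_anti₀ hax hlt.le)
            have hb3 : (0:ℝ) ≤ (Real.log (|x|)⁻¹) ^ (γ-1) := Real.rpow_nonneg hApos.le _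
            have key : δ * ((|x|)⁻¹ * γ * (Real.log (|x|)⁻¹) ^ (γ-1)) ≤
                δ * (δ⁻¹ * γ * ((2⁻¹ * Real.log δ⁻¹) ^ (γ-1))) := by
              apply mul_le_mul_of_nonneg_left _ hδ0.le
              apply mul_le_mul (mul_le_mul hb1 le_rfl hγ0.le (by positivity)) hb2 hb3
                (by positivity)
            have e : δ * (δ⁻¹ * γ * ((2⁻¹ * Real.log δ⁻¹) ^ (γ-1))) =
                γ * ((2⁻¹ * Real.log δ⁻¹) ^ (γ-1)) := by
              field_simp
            have hnn : (0:ℝ) ≤ M₁ * δ ^ (2⁻¹:ℝ) := by positivity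
            calc δ * ((|x|)⁻¹ * γ * (Real.log (|x|)⁻¹) ^ (γ-1))
                ≤ γ * ((2⁻¹ * Real.log δ⁻¹) ^ (γ-1)) := by rw [← e]; exact key
              _ ≤ γ * (M₁ * δ ^ (2⁻¹:ℝ) + (2⁻¹ * Real.log δ⁻¹) ^ (γ-1)) := by
                  have h6 := mul_nonneg hγ0.le hnn
                  linarith
        -- combine
        have habs : |deriv χ₀ x * w x + χ₀ x * (-x⁻¹ * γ * (-Real.log x) ^ (γ-1))|
            ≤ K * (1 + 2 * δ ^ (-(2⁻¹:ℝ))) + C₀ * ((|x|)⁻¹ * γ * (Real.log (|x|)⁻¹) ^ (γ-1)) := by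
          have hw0 : 0 ≤ w x := Real.rpow_nonneg (abs_nonneg _) _
          have t1 : |deriv χ₀ x * w x| ≤ K * (1 + 2 * δ ^ (-(2⁻¹:ℝ))) := by
            rw [abs_mul, abs_of_nonneg hw0]
            apply mul_le_mul (hK' x) hwxle hw0 hK0
          have t2 : |χ₀ x * (-x⁻¹ * γ * (-Real.log x) ^ (γ-1))|
              ≤ C₀ * ((|x|)⁻¹ * γ * (Real.log (|x|)⁻¹) ^ (γ-1)) := by
            rw [abs_mul]
            apply mul_le_mul (hC₀' x) _ (abs_nonneg _) hC₀0
            rw [hA]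
            rw [abs_mul, abs_mul]
            rw [abs_of_nonneg (Real.rpow_nonneg hApos.le _), abs_of_nonneg hγ0.le,
              abs_neg, abs_inv]
          calc _ ≤ |deriv χ₀ x * w x| + |χ₀ x * (-x⁻¹ * γ * (-Real.log x) ^ (γ-1))| :=
                abs_add_le _ _
            _ ≤ _ := add_le_add t1 t2
        calc |deriv χ₀ x * w x + χ₀ x * (-x⁻¹ * γ * (-Real.log x) ^ (γ-1))| * δ
            ≤ (K * (1 + 2 * δ ^ (-(2⁻¹:ℝ)))
              + C₀ * ((|x|)⁻¹ * γ * (Real.log (|x|)⁻¹) ^ (γ-1))) * δ :=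
              mul_le_mul_of_nonneg_right habs hδ0.le
          _ = K * (δ + 2 * (δ * δ ^ (-(2⁻¹:ℝ))))
              + C₀ * (δ * ((|x|)⁻¹ * γ * (Real.log (|x|)⁻¹) ^ (γ-1))) := by ring
          _ ≤ K * (δ + 2 * δ ^ (2⁻¹:ℝ))
              + C₀ * (γ * (M₁ * δ ^ (2⁻¹:ℝ) + (2⁻¹ * Real.log δ⁻¹) ^ (γ-1))) := by
              rw [hhalfmul]
              exact add_le_add le_rfl (mul_le_mul_of_nonneg_left hterm2 hC₀0)
          _ = Φ δ := by simp only [hΦdef]; ring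
      · simp only [if_neg hxc]
        rw [abs_zero, zero_mul]
        exact hΦpos
    -- pointwise bound via MVT
    have key : ∀ x ∈ Icc a b, |f x - f a| ≤ Φ δ := by
      intro x hx
      have hC := Convex.norm_image_sub_le_of_norm_hasDerivWithin_le
        (f := f) (f' := D) (s := Icc a b) (C := Φ δ / δ)
        (fun y hy => (hD y (by
          have := hfar y hy
          intro h; rw [h] at this; simp at this; linarith)).hasDerivWithinAt)
        (fun y hy => by
          rw [Real.norm_eq_abs]
          rw [le_div_iff₀ hδ0]
          exact hDb y (hfar y hy))
        (convex_Icc a b) (left_mem_Icc.mpr hab.le) hx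
      have hxa : |x - a| ≤ δ := by
        rw [abs_of_nonneg (by linarith [hx.1] : (0:ℝ) ≤ x - a)]
        linarith [hx.2]
      calc |f x - f a| ≤ Φ δ / δ * |x - a| := by
            simpa [Real.norm_eq_abs] using hC
        _ ≤ Φ δ / δ * δ := by
            apply mul_le_mul_of_nonneg_left hxa (by positivity)
        _ = Φ δ := div_mul_cancel₀ _ hδ0.ne'
    have h1 : (∫ x in a..b, |f x - f a|) ≤ Φ δ * δ := by
      have := intervalIntegral.integral_mono_on hab.le
        (((hfint a b).sub intervalIntegrable_const).norm)
        (intervalIntegrable_const (c := Φ δ))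
        (fun x hx => key x hx)
      rw [intervalIntegral.integral_const] at this
      calc (∫ x in a..b, |f x - f a|) ≤ (b - a) • Φ δ := this
        _ = Φ δ * δ := by rw [smul_eq_mul, hδdef]; ring
    have h2 := aux_osc hab (hfint a b) (f a)
    rw [← hδdef] at h2
    calc δ⁻¹ * (∫ x in a..b, |f x - δ⁻¹ * ∫ y in a..b, f y|)
        ≤ δ⁻¹ * (2 * ∫ x in a..b, |f x - f a|) := by
          apply mul_le_mul_of_nonneg_left h2 (by positivity)
      _ ≤ δ⁻¹ * (2 * (Φ δ * δ)) := by
          apply mul_le_mul_of_nonneg_left _ (by positivity)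
          linarith
      _ = 2 * Φ δ := by field_simp
      _ ≤ η := hΦη
  · -- Case B : interval near 0
    push_neg at hcase
    obtain ⟨haδ, hbδ⟩ := hcase
    have hsub : ∀ x ∈ Icc a b, |x| < 2*δ := by
      intro x hx
      have h1 := hx.1
      have h2 := hx.2
      have e := hδdef
      rw [abs_lt]
      constructor <;> linarith [e.le, e.ge]
    have hs0 : (0:ℝ) < 2*δ := by linarith
    have hBℓpos : 0 < Real.log (2*δ)⁻¹ := by
      rw [Real.log_inv]
      have := Real.log_neg hs0 h1δ
      linarith
    obtain ⟨Bℓ, hBℓdef⟩ : ∃ B : ℝ, B = Real.log (2*δ)⁻¹ := ⟨_, rfl⟩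
    have hBℓpos' : 0 < Bℓ := by rw [hBℓdef]; exact hBℓpos
    obtain ⟨Bγ, hBγdef⟩ : ∃ B : ℝ, B = Bℓ ^ γ := ⟨_, rfl⟩
    obtain ⟨G, hGdef⟩ : ∃ G : ℝ → ℝ, G = fun x => γ * Bℓ^(γ-1) * (-Real.log x - Bℓ) := ⟨_, rfl⟩
    have hint2 : IntervalIntegrable (fun x => |f x - Bγ|) volume a b :=
      ((hfint a b).sub intervalIntegrable_const).norm
    have hGint : ∀ u v : ℝ, IntervalIntegrable G volume u v := by
      intro u v
      rw [hGdef]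
      exact (((aux_int_log u v).neg.sub intervalIntegrable_const)).const_mul _
    have hae : (fun x => |f x - Bγ|) ≤ᵐ[volume.restrict (Icc a b)] G := by
      have hne : ∀ᵐ x : ℝ ∂(volume.restrict (Icc a b)), x ≠ 0 := by
        apply ae_restrict_of_ae
        rw [ae_iff]
        have : {x : ℝ | ¬x ≠ 0} = {0} := by ext z; simp
        rw [this]
        exact measure_singleton 0
      have hmem2 : ∀ᵐ x ∂(volume.restrict (Icc a b)), x ∈ Icc a b :=
        ae_restrict_mem measurableSet_Icc
      filter_upwards [hne, hmem2] with x hx0 hxm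
      have hxabs : |x| < 2*δ := hsub x hxm
      have hax : 0 < |x| := abs_pos.2 hx0
      have hχ1 : χ₀ x = 1 := hρ x (by linarith)
      have hfx : f x = w x := by rw [hfdef]; simp only; rw [hχ1, one_mul]
      have hax1 : |x| < 1 := by linarith
      have hApos : 0 < Real.log (|x|)⁻¹ := by
        rw [Real.log_inv]
        have := Real.log_neg hax hax1
        linarith
      have hwx : w x = (Real.log (|x|)⁻¹) ^ γ := by
        rw [hwdef]
        simp only
        have : Real.log |x| < 0 := Real.log_neg hax hax1
        rw [abs_of_neg this, ← Real.log_inv]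
      have hBA : Bℓ ≤ Real.log (|x|)⁻¹ := by
        rw [hBℓdef]
        exact Real.log_le_log (by positivity) (inv_anti₀ hax hxabs.le)
      have hlow : Bγ ≤ (Real.log (|x|)⁻¹) ^ γ := by
        rw [hBγdef]
        exact Real.rpow_le_rpow hBℓpos'.le hBA hγ0.le
      have htan := aux_tangent hγ0.le hγ1.le hBℓpos' hBA
      have hGx : G x = γ * Bℓ^(γ-1) * (Real.log (|x|)⁻¹ - Bℓ) := by
        rw [hGdef]
        simp only
        rw [Real.log_inv, Real.log_abs]
      rw [hfx, hwx, hGx]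
      rw [abs_of_nonneg (by rw [hBγdef] at hlow ⊢; linarith)]
      rw [hBγdef]
      linarith
    have hmono : (∫ x in a..b, |f x - Bγ|) ≤ ∫ x in a..b, G x :=
      intervalIntegral.integral_mono_ae_restrict hab.le hint2 (hGint a b) hae
    -- compute/bound the integral of G
    have hGval : (∫ x in a..b, G x) ≤ γ * Bℓ^(γ-1) * (4*δ) := by
      have hFint : ∀ u v : ℝ, IntervalIntegrable (fun x => -Real.log x - Bℓ) volume u v :=
        fun u v => (aux_int_log u v).neg.sub intervalIntegrable_const
      have hstep1 : (∫ x in a..b, (-Real.log x - Bℓ)) ≤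
          ∫ x in (-(2*δ))..(2*δ), (-Real.log x - Bℓ) := by
        rw [intervalIntegral.integral_of_le hab.le,
          intervalIntegral.integral_of_le (by linarith : -(2*δ) ≤ 2*δ)]
        apply setIntegral_mono_set
        · have h := hFint (-(2*δ)) (2*δ)
          rw [intervalIntegrable_iff, uIoc_of_le (by linarith : -(2*δ) ≤ 2*δ)] at h
          exact h
        · have hne : ∀ᵐ x : ℝ ∂(volume.restrict (Ioc (-(2*δ)) (2*δ))), x ≠ 0 := by
            apply ae_restrict_of_ae
            rw [ae_iff]
            have : {x : ℝ | ¬x ≠ 0} = {0} := by ext z; simp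
            rw [this]
            exact measure_singleton 0
          have hmem3 : ∀ᵐ x ∂(volume.restrict (Ioc (-(2*δ)) (2*δ))), x ∈ Ioc (-(2*δ)) (2*δ) :=
            ae_restrict_mem measurableSet_Ioc
          filter_upwards [hne, hmem3] with x hx0 hxm
          have hax : 0 < |x| := abs_pos.2 hx0
          have haxs : |x| ≤ 2*δ := by
            rw [abs_le]; exact ⟨by linarith [hxm.1], hxm.2⟩
          have : Real.log (2*δ)⁻¹ ≤ Real.log (|x|)⁻¹ :=
            Real.log_le_log (by positivity) (inv_anti₀ hax haxs)
          have he : -Real.log x = Real.log (|x|)⁻¹ := by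
            rw [Real.log_inv, Real.log_abs]
          simp only [Pi.zero_apply]
          rw [hBℓdef]
          rw [he] at *
          linarith
        · apply HasSubset.Subset.eventuallyLE
          intro x hx
          exact ⟨by linarith [hx.1], by linarith [hx.2]⟩
      have hstep2 : (∫ x in (-(2*δ))..(2*δ), (-Real.log x - Bℓ)) = 4*δ := by
        have hsplit := intervalIntegral.integral_add_adjacent_intervals
          (f := fun x => -Real.log x - Bℓ) (μ := volume)
          (a := -(2*δ)) (b := 0) (c := 2*δ) (hFint _ _) (hFint _ _)
        have hneg : (∫ x in (-(2*δ))..(0:ℝ), (-Real.log x - Bℓ)) =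
            ∫ x in (0:ℝ)..(2*δ), (-Real.log x - Bℓ) := by
          have hcomp := intervalIntegral.integral_comp_neg (a := (0:ℝ)) (b := 2*δ)
            (f := fun x => -Real.log x - Bℓ)
          simp only [neg_zero] at hcomp
          rw [← hcomp]
          congr 1
          ext x
          rw [Real.log_neg_eq_log]
        have h0s : (∫ x in (0:ℝ)..(2*δ), (-Real.log x - Bℓ)) = 2*δ := by
          have hsub' : IntervalIntegrable (fun x : ℝ => -Real.log x) volume 0 (2*δ) :=
            (aux_int_log 0 (2*δ)).neg
          rw [intervalIntegral.integral_sub hsub' intervalIntegrable_const]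
          rw [intervalIntegral.integral_neg, aux_integral_log_zero hs0]
          rw [intervalIntegral.integral_const]
          rw [hBℓdef, Real.log_inv]
          simp only [smul_eq_mul, sub_zero]
          ring
        rw [← hsplit, hneg, h0s]
        ring
      have hnn : (0:ℝ) ≤ γ * Bℓ^(γ-1) := by
        have := Real.rpow_nonneg hBℓpos'.le (γ-1)
        positivity
      calc (∫ x in a..b, G x) = γ * Bℓ^(γ-1) * ∫ x in a..b, (-Real.log x - Bℓ) := by
            rw [hGdef]
            exact intervalIntegral.integral_const_mul _ _
        _ ≤ γ * Bℓ^(γ-1) * (4*δ) := by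
            apply mul_le_mul_of_nonneg_left _ hnn
            calc (∫ x in a..b, (-Real.log x - Bℓ))
                ≤ ∫ x in (-(2*δ))..(2*δ), (-Real.log x - Bℓ) := hstep1
              _ = 4*δ := hstep2
    have h2 := aux_osc hab (hfint a b) Bγ
    rw [← hδdef] at h2
    have hnn : (0:ℝ) ≤ γ * Bℓ^(γ-1) := by
      have := Real.rpow_nonneg hBℓpos'.le (γ-1)
      positivity
    calc δ⁻¹ * (∫ x in a..b, |f x - δ⁻¹ * ∫ y in a..b, f y|)
        ≤ δ⁻¹ * (2 * ∫ x in a..b, |f x - Bγ|) := by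
          apply mul_le_mul_of_nonneg_left h2 (by positivity)
      _ ≤ δ⁻¹ * (2 * (γ * Bℓ^(γ-1) * (4*δ))) := by
          apply mul_le_mul_of_nonneg_left _ (by positivity)
          have := le_trans hmono hGval
          linarith
      _ = 8 * γ * Bℓ^(γ-1) := by field_simp; ring
      _ = Ψ δ := by rw [hΨdef, hBℓdef]
      _ ≤ η := hΨη
end
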